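/- arXiv:1501.06975 — 2 statements merged into one kernel-verified Lean document; each statement's English description precedes it below -/
import Mathlib

section
/- Let Δ < 0 be an integer with Δ ≡ 0 or 1 (mod 4), let p be a prime dividing Δ (so the Kronecker symbol (Δ/p) = 0), and let C_p ⊂ GL₂(𝔽_p) be the subgroup of matrices of the form [[α, β(Δ − Δ²)/4], [β, α + βΔ]] with α, β ∈ 𝔽_p and determinant α² + Δαβ + ((Δ² − Δ)/4)β² ≠ 0. If H is a subgroup of C_p and there exists a nonzero vector v ∈ 𝔽_p² with gv = v for every g ∈ H, then the order of H divides p. -/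
/-- Let `Δ < 0` with `Δ ≡ 0, 1 (mod 4)`, let `p` be a prime dividing `Δ` (so the
Kronecker symbol `(Δ/p) = 0`), and let `C_p ⊆ GL₂(𝔽_p)` consist of the invertible matrices
`[[α, β(Δ − Δ²)/4], [β, α + βΔ]]`.  If `H` is a subgroup of `C_p` fixing a nonzero vector
`v ∈ 𝔽_p²`, then `#H ∣ p`. -/
theorem card_dvd_p_of_ramified (Δ : ℤ) (hΔneg : Δ < 0) (hΔ : Δ % 4 = 0 ∨ Δ % 4 = 1)
    (p : ℕ) (hp : p.Prime) (hdvd : (p : ℤ) ∣ Δ)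
    (H : Subgroup (GL (Fin 2) (ZMod p)))
    (hH : ∀ g ∈ H, ∃ α β : ZMod p,
      (g : Matrix (Fin 2) (Fin 2) (ZMod p)) =
        !![α, β * (((Δ - Δ ^ 2) / 4 : ℤ) : ZMod p); β, α + β * (Δ : ZMod p)])
    (v : Fin 2 → ZMod p) (hv : v ≠ 0)
    (hfix : ∀ g ∈ H, Matrix.mulVec (g : Matrix (Fin 2) (Fin 2) (ZMod p)) v = v) :
    Nat.card H ∣ p := by
  haveI : Fact p.Prime := ⟨hp⟩
  set ε : ZMod p := (((Δ - Δ ^ 2) / 4 : ℤ) : ZMod p) with hεdef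
  have hΔp : ((Δ : ℤ) : ZMod p) = 0 := (ZMod.intCast_zmod_eq_zero_iff_dvd Δ p).2 hdvd
  have h4 : (4 : ℤ) ∣ Δ - Δ ^ 2 := by
    rcases hΔ with h | h
    · obtain ⟨k, hk⟩ : ∃ k, Δ = 4 * k := ⟨Δ / 4, by omega⟩
      exact ⟨k - 4 * k ^ 2, by rw [hk]; ring⟩
    · obtain ⟨k, hk⟩ : ∃ k, Δ = 4 * k + 1 := ⟨Δ / 4, by omega⟩
      exact ⟨-k - 4 * k ^ 2, by rw [hk]; ring⟩
  have h4ε : (4 : ZMod p) * ε = 0 := by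
    have hc := Int.mul_ediv_cancel' h4
    calc (4 : ZMod p) * ε = ((4 * ((Δ - Δ ^ 2) / 4) : ℤ) : ZMod p) := by push_cast; ring
      _ = ((Δ - Δ ^ 2 : ℤ) : ZMod p) := by rw [hc]
      _ = 0 := by push_cast [hΔp]; ring
  have h2ε : (2 : ZMod p) = 0 ∨ ε = 0 := by
    by_cases hp2 : p = 2
    · left
      subst hp2
      have h2 : ((2 : ℕ) : ZMod 2) = 0 := ZMod.natCast_self 2
      simpa using h2
    · right
      have h4ne : (4 : ZMod p) ≠ 0 := by
        intro h0
        have : (p : ℤ) ∣ 4 := by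
          have := (ZMod.intCast_zmod_eq_zero_iff_dvd 4 p).1 (by exact_mod_cast h0)
          exact this
        have hpd : p ∣ 4 := by exact_mod_cast this
        have hp2' : p ∣ 2 := hp.dvd_of_dvd_pow (n := 2) (by simpa [pow_two] using hpd)
        exact hp2 ((Nat.prime_dvd_prime_iff_eq hp Nat.prime_two).1 hp2')
      exact (mul_eq_zero.1 h4ε).resolve_left h4ne
  -- nonvanishing of a coordinate of v
  have hvne : v 0 ≠ 0 ∨ v 1 ≠ 0 := by
    by_contra h
    push_neg at h
    exact hv (funext fun i => by fin_cases i <;> simp [h.1, h.2])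
  -- structural data for each element of H
  have key : ∀ g ∈ H, ∃ α β : ZMod p,
      (g : Matrix (Fin 2) (Fin 2) (ZMod p)) = !![α, β * ε; β, α] ∧
      α * v 0 + β * ε * v 1 = v 0 ∧ β * v 0 + α * v 1 = v 1 := by
    intro g hg
    obtain ⟨α, β, hA⟩ := hH g hg
    have hA' : (g : Matrix (Fin 2) (Fin 2) (ZMod p)) = !![α, β * ε; β, α] := by
      rw [hA, hΔp]; norm_num
    refine ⟨α, β, hA', ?_, ?_⟩
    · have h0 := congrFun (hfix g hg) 0
      rw [hA'] at h0
      simpa [Matrix.mulVec, dotProduct, Fin.sum_univ_two] using h0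
    · have h1 := congrFun (hfix g hg) 1
      rw [hA'] at h1
      simpa [Matrix.mulVec, dotProduct, Fin.sum_univ_two] using h1
  -- the scalar identity underlying multiplicativity
  have scalar : ∀ α β α' β' : ZMod p,
      α * v 0 + β * ε * v 1 = v 0 → β * v 0 + α * v 1 = v 1 →
      α' * v 0 + β' * ε * v 1 = v 0 → β' * v 0 + α' * v 1 = v 1 →
      β * α' + α * β' = β + β' := by
    intro α β α' β' e1 e2 e1' e2'
    by_cases hv1 : v 1 = 0
    · have hv0 : v 0 ≠ 0 := by rcases hvne with h | h; exact h; exact absurd hv1 h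
      have hβ : β = 0 := by
        have : β * v 0 = 0 := by rw [hv1] at e2; linear_combination e2
        exact (mul_eq_zero.1 this).resolve_right hv0
      have hβ' : β' = 0 := by
        have : β' * v 0 = 0 := by rw [hv1] at e2'; linear_combination e2'
        exact (mul_eq_zero.1 this).resolve_right hv0
      have hα : α = 1 := by
        have : (α - 1) * v 0 = 0 := by rw [hv1] at e1; linear_combination e1
        have := (mul_eq_zero.1 this).resolve_right hv0
        linear_combination this
      subst hβ; subst hβ'
      simp [hα]
    · -- v 1 ≠ 0 : multiply through by v 1
      have hmul : (β * α' + α * β' - β - β') * v 1 = -(2 * (β * β' * v 0)) := by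
        have hαv1 : α * v 1 = v 1 - β * v 0 := by linear_combination e2
        have hα'v1 : α' * v 1 = v 1 - β' * v 0 := by linear_combination e2'
        calc (β * α' + α * β' - β - β') * v 1
            = β * (α' * v 1) + β' * (α * v 1) - (β + β') * v 1 := by ring
          _ = -(2 * (β * β' * v 0)) := by rw [hαv1, hα'v1]; ring
      have hz : β * β' * v 0 * (2 : ZMod p) = 0 := by
        rcases h2ε with h2 | hε0
        · rw [h2]; ring
        · -- p odd : ε = 0, so α v0 = v0 etc.
          by_cases hv0 : v 0 = 0
          · rw [hv0]; ring
          · have hα : α = 1 := by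
              have : (α - 1) * v 0 = 0 := by rw [hε0] at e1; linear_combination e1
              have := (mul_eq_zero.1 this).resolve_right hv0
              linear_combination this
            have hβ : β = 0 := by
              have : β * v 0 = 0 := by rw [hα] at e2; linear_combination e2
              exact (mul_eq_zero.1 this).resolve_right hv0
            rw [hβ]; ring
      have : (β * α' + α * β' - β - β') * v 1 = 0 := by
        rw [hmul]; linear_combination -hz
      have := (mul_eq_zero.1 this).resolve_right hv1
      linear_combination this
  -- build an injective hom into (ZMod p, +)
  let f : H →* Multiplicative (ZMod p) :=
  { toFun := fun g => Multiplicative.ofAdd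
      (((g : GL (Fin 2) (ZMod p)) : Matrix (Fin 2) (Fin 2) (ZMod p)) 1 0)
    map_one' := by
      have h1 : (((1 : H) : GL (Fin 2) (ZMod p)) : Matrix (Fin 2) (Fin 2) (ZMod p)) 1 0 = 0 := by
        simp [Matrix.one_apply]
      rw [h1, ofAdd_zero]
    map_mul' := by
      intro g g'
      obtain ⟨α, β, hA, e1, e2⟩ := key g g.2
      obtain ⟨α', β', hA', e1', e2'⟩ := key g' g'.2
      have hprod : ((↑(g * g') : GL (Fin 2) (ZMod p)) : Matrix (Fin 2) (Fin 2) (ZMod p))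
          = (g : GL (Fin 2) (ZMod p)) * (g' : GL (Fin 2) (ZMod p)) := rfl
      have : (((g * g' : H) : GL (Fin 2) (ZMod p)) : Matrix (Fin 2) (Fin 2) (ZMod p)) 1 0
          = β + β' := by
        have hm : (((g * g' : H) : GL (Fin 2) (ZMod p)) : Matrix (Fin 2) (Fin 2) (ZMod p))
            = !![α, β * ε; β, α] * !![α', β' * ε; β', α'] := by
          rw [show (((g * g' : H) : GL (Fin 2) (ZMod p)) : Matrix (Fin 2) (Fin 2) (ZMod p))
              = ((g : GL (Fin 2) (ZMod p)) : Matrix (Fin 2) (Fin 2) (ZMod p))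
                * ((g' : GL (Fin 2) (ZMod p)) : Matrix (Fin 2) (Fin 2) (ZMod p)) from rfl,
            hA, hA']
        rw [hm, Matrix.mul_fin_two]
        simpa using scalar α β α' β' e1 e2 e1' e2'
      rw [this, hA, hA']
      simp [← ofAdd_add]
  }
  have hinj : Function.Injective f := by
    rw [injective_iff_map_eq_one]
    intro g hg1
    obtain ⟨α, β, hA, e1, e2⟩ := key g g.2
    have hβ : β = 0 := by
      have : ((g : GL (Fin 2) (ZMod p)) : Matrix (Fin 2) (Fin 2) (ZMod p)) 1 0 = 0 := by
        have := congrArg Multiplicative.toAdd hg1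
        simpa [f] using this
      rw [hA] at this
      simpa using this
    have hα : α = 1 := by
      subst hβ
      rcases hvne with h | h
      · have : α * v 0 = v 0 := by linear_combination e1
        have h' : (α - 1) * v 0 = 0 := by linear_combination this
        have := (mul_eq_zero.1 h').resolve_right h
        linear_combination this
      · have : α * v 1 = v 1 := by linear_combination e2
        have h' : (α - 1) * v 1 = 0 := by linear_combination this
        have := (mul_eq_zero.1 h').resolve_right h
        linear_combination this
    have hmat : ((g : GL (Fin 2) (ZMod p)) : Matrix (Fin 2) (Fin 2) (ZMod p)) = 1 := by
      rw [hA, hα, hβ]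
      ext i j
      fin_cases i <;> fin_cases j <;> simp [Matrix.one_apply]
    have : (g : GL (Fin 2) (ZMod p)) = 1 := Units.ext hmat
    exact Subtype.ext this
  have := Subgroup.card_dvd_of_injective f hinj
  simpa [Nat.card_zmod] using this
end

section
/- Let Δ < 0 be an integer with Δ ≡ 0 or 1 (mod 4), let p be a prime, let A ≥ 1 be an integer, and let 𝒦 denote the kernel of the reduction map C_{p^{A+1}} → C_{p^A}, where for each N the group C_N ⊂ GL₂(ℤ/Nℤ) consists of the matrices [[α, β(Δ − Δ²)/4], [β, α + βΔ]] with α, β ∈ ℤ/Nℤ and determinant in (ℤ/Nℤ)^×. Let H be a subgroup of 𝒦 such that there exists a vector v ∈ (ℤ/p^{A+1}ℤ)² of additive order exactly p^{A+1} with gv = v for every g ∈ H. Then H is a proper subgroup of 𝒦 (in particular the scalar matrix (1 + p^A)·Id lies in 𝒦 but not in H), and the order of H divides p. -/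
private lemma sq_zero_one_add_pow {R : Type*} [Ring R] (N : R) (h : N * N = 0) :
    ∀ k : ℕ, (1 + N) ^ k = 1 + k • N := by
  intro k
  induction k with
  | zero => simp
  | succ k ih =>
    rw [pow_succ, ih, add_mul, one_mul, mul_add, mul_one, smul_mul_assoc, h, smul_zero,
      add_zero, succ_nsmul]
    abel

/-- Let `Δ < 0` with `Δ ≡ 0, 1 (mod 4)`, `p` prime, `A ≥ 1`, and let `𝒦` be the
kernel of the reduction map `C_{p^{A+1}} → C_{p^A}`, i.e. the elements of `C_{p^{A+1}}` whose
matrix reduces to the identity modulo `p^A`.  If `H` is a subgroup of `𝒦` fixing a vector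
`v ∈ (ℤ/p^{A+1}ℤ)²` of additive order exactly `p^{A+1}`, then `H` is a proper subgroup of `𝒦`
(the scalar matrix `(1 + p^A)·Id` lies in `𝒦` but not in `H`), and `#H ∣ p`. -/
theorem ker_reduction_fixed_vector (Δ : ℤ) (hΔneg : Δ < 0) (hΔ : Δ % 4 = 0 ∨ Δ % 4 = 1)
    (p : ℕ) (hp : p.Prime) (A : ℕ) (hA : 1 ≤ A)
    (H : Subgroup (GL (Fin 2) (ZMod (p ^ (A + 1)))))
    (hH : ∀ g ∈ H,
      (∃ α β : ZMod (p ^ (A + 1)),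
        (g : Matrix (Fin 2) (Fin 2) (ZMod (p ^ (A + 1)))) =
          !![α, β * (((Δ - Δ ^ 2) / 4 : ℤ) : ZMod (p ^ (A + 1))); β, α + β * (Δ : ZMod (p ^ (A + 1)))]) ∧
      (g : Matrix (Fin 2) (Fin 2) (ZMod (p ^ (A + 1)))).map
          (ZMod.castHom (pow_dvd_pow p A.le_succ) (ZMod (p ^ A))) = 1)
    (v : Fin 2 → ZMod (p ^ (A + 1))) (hv : addOrderOf v = p ^ (A + 1))
    (hfix : ∀ g ∈ H, Matrix.mulVec (g : Matrix (Fin 2) (Fin 2) (ZMod (p ^ (A + 1)))) v = v) :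
    (∃ s : GL (Fin 2) (ZMod (p ^ (A + 1))),
      (s : Matrix (Fin 2) (Fin 2) (ZMod (p ^ (A + 1)))) =
        (1 + (p : ZMod (p ^ (A + 1))) ^ A) • (1 : Matrix (Fin 2) (Fin 2) (ZMod (p ^ (A + 1)))) ∧
      (∃ α β : ZMod (p ^ (A + 1)),
        (s : Matrix (Fin 2) (Fin 2) (ZMod (p ^ (A + 1)))) =
          !![α, β * (((Δ - Δ ^ 2) / 4 : ℤ) : ZMod (p ^ (A + 1))); β, α + β * (Δ : ZMod (p ^ (A + 1)))]) ∧
      (s : Matrix (Fin 2) (Fin 2) (ZMod (p ^ (A + 1)))).map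
          (ZMod.castHom (pow_dvd_pow p A.le_succ) (ZMod (p ^ A))) = 1 ∧
      s ∉ H) ∧
    Nat.card H ∣ p := by
  haveI : Fact p.Prime := ⟨hp⟩
  haveI : NeZero (p ^ (A + 1)) := ⟨pow_ne_zero _ hp.ne_zero⟩
  haveI : NeZero (p ^ A) := ⟨pow_ne_zero _ hp.ne_zero⟩

  set cΔ : ZMod (p ^ (A + 1)) := (((Δ - Δ ^ 2) / 4 : ℤ) : ZMod (p ^ (A + 1))) with hcΔ
  set dΔ : ZMod (p ^ (A + 1)) := ((Δ : ℤ) : ZMod (p ^ (A + 1))) with hdΔ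
  set f := ZMod.castHom (pow_dvd_pow p A.le_succ) (ZMod (p ^ A)) with hf
  have hval : ∀ x : ZMod (p ^ (A + 1)), ((x.val : ℕ) : ZMod (p ^ (A + 1))) = x := fun x => by
    rw [ZMod.natCast_val, ZMod.cast_id]
  -- products of two p^A-divisible elements vanish
  have hdvd_mul : ∀ x y : ZMod (p ^ (A + 1)), (p ^ A : ℕ) ∣ x.val → (p ^ A : ℕ) ∣ y.val → x * y = 0 := by
    intro x y hx hy
    have h0 : ((x.val * y.val : ℕ) : ZMod (p ^ (A + 1))) = 0 := by
      rw [ZMod.natCast_eq_zero_iff]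
      exact dvd_trans (pow_dvd_pow p (by omega : A + 1 ≤ A + A))
        (by rw [pow_add]; exact mul_dvd_mul hx hy)
    calc x * y = ((x.val * y.val : ℕ) : ZMod (p ^ (A + 1))) := by
          rw [Nat.cast_mul, hval, hval]
      _ = 0 := h0
  -- kernel of reduction
  have hker : ∀ x : ZMod (p ^ (A + 1)), f x = 0 → (p ^ A : ℕ) ∣ x.val := by
    intro x hx
    rw [hf, ZMod.castHom_apply] at hx
    have h0 : ((x.val : ℕ) : ZMod (p ^ A)) = 0 := by rw [ZMod.natCast_val]; exact hx
    exact (ZMod.natCast_eq_zero_iff _ _).mp h0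
  have hp_smul : ∀ x : ZMod (p ^ (A + 1)), (p ^ A : ℕ) ∣ x.val → (p : ZMod (p ^ (A + 1))) * x = 0 := by
    intro x hx
    obtain ⟨t, ht⟩ := hx
    have h0 : ((p * x.val : ℕ) : ZMod (p ^ (A + 1))) = 0 := by
      rw [ZMod.natCast_eq_zero_iff]
      exact ⟨t, by rw [ht]; ring⟩
    calc (p : ZMod (p ^ (A + 1))) * x = ((p * x.val : ℕ) : ZMod (p ^ (A + 1))) := by rw [Nat.cast_mul, hval]
      _ = 0 := h0
  have hunit : ∀ x : ZMod (p ^ (A + 1)), (p : ZMod (p ^ (A + 1))) ^ A * x ≠ 0 → IsUnit x := by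
    intro x hx
    have hpd : ¬ p ∣ x.val := by
      rintro ⟨t, ht⟩
      apply hx
      have h0 : ((p ^ A * x.val : ℕ) : ZMod (p ^ (A + 1))) = 0 := by
        rw [ZMod.natCast_eq_zero_iff]
        exact ⟨t, by rw [ht]; ring⟩
      calc (p : ZMod (p ^ (A + 1))) ^ A * x = ((p ^ A * x.val : ℕ) : ZMod (p ^ (A + 1))) := by
            rw [Nat.cast_mul, Nat.cast_pow, hval]
        _ = 0 := h0
    have h1 : IsUnit ((x.val : ℕ) : ZMod (p ^ (A + 1))) := by
      rw [ZMod.isUnit_iff_coprime]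
      exact Nat.Coprime.pow_right _ (Nat.coprime_comm.mp ((hp.coprime_iff_not_dvd).mpr hpd))
    rwa [hval] at h1
  -- v has full order
  have hsm : ¬ ((p ^ A : ℕ) • v = 0) := by
    intro h
    have hdv : p ^ (A + 1) ∣ p ^ A := hv ▸ addOrderOf_dvd_of_nsmul_eq_zero h
    have := Nat.le_of_dvd (pow_pos hp.pos A) hdv
    exact absurd this (not_le.mpr (Nat.pow_lt_pow_succ hp.one_lt))
  have hor : IsUnit (v 0) ∨ IsUnit (v 1) := by
    by_cases h0 : (p : ZMod (p ^ (A + 1))) ^ A * v 0 = 0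
    · right
      apply hunit
      intro h1
      apply hsm
      funext i
      have hx : ∀ j : Fin 2, (p : ZMod (p ^ (A + 1))) ^ A * v j = 0 := by
        intro j
        fin_cases j
        · exact h0
        · exact h1
      have : ((p ^ A : ℕ) • v) i = (p : ZMod (p ^ (A + 1))) ^ A * v i := by
        simp [nsmul_eq_mul]
      rw [Pi.zero_apply, ← hx i, ← this]
    · exact Or.inl (hunit _ h0)
  -- the lambda
  obtain ⟨lam, hlam⟩ : ∃ lam : ZMod (p ^ (A + 1)), ∀ α β : ZMod (p ^ (A + 1)),
      α * v 0 + β * cΔ * v 1 = v 0 → β * v 0 + (α + β * dΔ) * v 1 = v 1 →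
      α = 1 + lam * β := by
    rcases hor with hu0 | hu1
    · refine ⟨-(cΔ * v 1 * (v 0)⁻¹), fun α β e1 e2 => ?_⟩
      have hinv := ZMod.mul_inv_of_unit (v 0) hu0
      linear_combination (v 0)⁻¹ * e1 - (α - 1) * hinv
    · refine ⟨-(v 0 * (v 1)⁻¹ + dΔ), fun α β e1 e2 => ?_⟩
      have hinv := ZMod.mul_inv_of_unit (v 1) hu1
      linear_combination (v 1)⁻¹ * e2 - (α + β * dΔ - 1) * hinv
  set W : Matrix (Fin 2) (Fin 2) (ZMod (p ^ (A + 1))) := !![lam, cΔ; 1, lam + dΔ] with hW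
  have key : ∀ g ∈ H, ∃ b : ZMod (p ^ (A + 1)), (p ^ A : ℕ) ∣ b.val ∧
      (g : Matrix (Fin 2) (Fin 2) (ZMod (p ^ (A + 1)))) = 1 + b • W := by
    intro g hg
    obtain ⟨⟨α, β, hform⟩, hred⟩ := hH g hg
    refine ⟨β, ?_, ?_⟩
    · apply hker
      have h10 := congrFun (congrFun hred 1) 0
      simpa [hform, Matrix.map_apply, Matrix.one_apply] using h10
    · have hmv := hfix g hg
      rw [hform] at hmv
      have e1 := congrFun hmv 0
      have e2 := congrFun hmv 1
      simp [Matrix.mulVec, dotProduct, Fin.sum_univ_two] at e1 e2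
      have hα : α = 1 + lam * β := by
        apply hlam α β
        · linear_combination e1
        · linear_combination e2
      rw [hform, hα]
      ext i j
      fin_cases i <;> fin_cases j <;>
        simp [hW, Matrix.one_apply, Matrix.add_apply, Matrix.smul_apply] <;> ring
  have hsq : ∀ b b' : ZMod (p ^ (A + 1)), (p ^ A : ℕ) ∣ b.val → (p ^ A : ℕ) ∣ b'.val →
      (b • W) * (b' • W) = 0 := by
    intro b b' hb hb'
    rw [smul_mul_smul_comm, hdvd_mul _ _ hb hb', zero_smul]
  constructor
  · -- part 1 : the scalar matrix
    have hcast : ((1 + p ^ A : ℕ) : ZMod (p ^ (A + 1))) = 1 + (p : ZMod (p ^ (A + 1))) ^ A := by push_cast; ring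
    have hcu : IsUnit (1 + (p : ZMod (p ^ (A + 1))) ^ A) := by
      rw [← hcast, ZMod.isUnit_iff_coprime]
      apply Nat.Coprime.pow_right
      have hnd : ¬ p ∣ 1 + p ^ A := by
        intro h
        have hpA : p ∣ p ^ A := dvd_pow_self p (by omega)
        rw [Nat.add_comm] at h
        have hp1 : p ∣ 1 := (Nat.dvd_add_right hpA).mp h
        exact absurd (Nat.le_of_dvd one_pos hp1) (not_le.mpr hp.one_lt)
      exact Nat.coprime_comm.mp ((hp.coprime_iff_not_dvd).mpr hnd)
    obtain ⟨u, hu⟩ := hcu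
    refine ⟨Units.map (Matrix.scalar (Fin 2)).toMonoidHom u, ?_, ?_, ?_, ?_⟩
    case _ =>
      show (Matrix.scalar (Fin 2)) (u : ZMod (p ^ (A + 1))) = _
      ext i j
      by_cases h : i = j <;>
        simp [Matrix.scalar_apply, Matrix.diagonal_apply, Matrix.one_apply, h, hu]
    case _ =>
      refine ⟨1 + (p : ZMod (p ^ (A + 1))) ^ A, 0, ?_⟩
      show (Matrix.scalar (Fin 2)) (u : ZMod (p ^ (A + 1))) = _
      ext i j
      fin_cases i <;> fin_cases j <;>
        simp [Matrix.scalar_apply, Matrix.diagonal_apply, hu]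
    case _ =>
      have hf1 : f (1 + (p : ZMod (p ^ (A + 1))) ^ A) = 1 := by
        rw [map_add, map_one, map_pow, map_natCast, ← Nat.cast_pow, ZMod.natCast_self]
        simp
      show ((Matrix.scalar (Fin 2)) (u : ZMod (p ^ (A + 1)))).map f = 1
      ext i j
      by_cases h : i = j <;>
        simp [Matrix.scalar_apply, Matrix.diagonal_apply, Matrix.one_apply, h, hu, hf1,
          Matrix.map_apply]
    case _ =>
      intro hs
      have h1 := hfix _ hs
      have hval1 : ((Units.map (Matrix.scalar (Fin 2)).toMonoidHom u :
          GL (Fin 2) (ZMod (p ^ (A + 1)))) : Matrix (Fin 2) (Fin 2) (ZMod (p ^ (A + 1)))) =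
          (1 + (p : ZMod (p ^ (A + 1))) ^ A) • (1 : Matrix (Fin 2) (Fin 2) (ZMod (p ^ (A + 1)))) := by
        show (Matrix.scalar (Fin 2)) (u : ZMod (p ^ (A + 1))) = _
        ext i j
        by_cases h : i = j <;>
          simp [Matrix.scalar_apply, Matrix.diagonal_apply, Matrix.one_apply, h, hu]
      rw [hval1, Matrix.smul_mulVec, Matrix.one_mulVec] at h1
      apply hsm
      funext i
      have h2 := congrFun h1 i
      have h3 : (1 + (p : ZMod (p ^ (A + 1))) ^ A) * v i = v i := h2
      have h4 : (p : ZMod (p ^ (A + 1))) ^ A * v i = 0 := by linear_combination h3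
      have : ((p ^ A : ℕ) • v) i = (p : ZMod (p ^ (A + 1))) ^ A * v i := by simp [nsmul_eq_mul]
      rw [this, h4, Pi.zero_apply]
  · -- part 2 : card divides p
    rcases eq_or_ne H ⊥ with hbot | hbot
    · rw [hbot, Subgroup.card_bot]
      exact one_dvd p
    · obtain ⟨g₀h, hg₀ne⟩ := Subgroup.ne_bot_iff_exists_ne_one.mp hbot
      set g₀ : GL (Fin 2) (ZMod (p ^ (A + 1))) := (g₀h : GL (Fin 2) (ZMod (p ^ (A + 1)))) with hg₀
      obtain ⟨b₀, hb₀dvd, hb₀⟩ := key g₀ g₀h.2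
      have hb₀ne : b₀ ≠ 0 := by
        intro h
        apply hg₀ne
        have hm : (g₀ : Matrix (Fin 2) (Fin 2) (ZMod (p ^ (A + 1)))) = 1 := by
          rw [hb₀, h, zero_smul, add_zero]
        have : g₀ = 1 := Units.ext hm
        exact Subtype.ext this
      have hle : H ≤ Subgroup.zpowers g₀ := by
        intro g hg
        obtain ⟨b, hbdvd, hb⟩ := key g hg
        obtain ⟨m₀, hm₀⟩ := id hb₀dvd
        obtain ⟨m, hm⟩ := id hbdvd
        have hm₀p : m₀ < p := by
          have h1 : b₀.val < p ^ (A + 1) := ZMod.val_lt b₀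
          rw [hm₀] at h1
          rw [pow_succ] at h1
          exact lt_of_mul_lt_mul_left h1 (Nat.zero_le _)
        have hm₀ne : m₀ ≠ 0 := by
          intro h
          apply hb₀ne
          rw [← ZMod.val_eq_zero, hm₀, h, mul_zero]
        have hm₀unit : IsUnit ((m₀ : ℕ) : ZMod p) := by
          rw [ZMod.isUnit_iff_coprime]
          refine Nat.coprime_comm.mp ((hp.coprime_iff_not_dvd).mpr ?_)
          intro hd
          exact absurd (Nat.le_of_dvd (Nat.pos_of_ne_zero hm₀ne) hd) (not_le.mpr hm₀p)
        set k : ℕ := (((m : ℕ) : ZMod p) * ((m₀ : ℕ) : ZMod p)⁻¹).val with hk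
        have hkm : ((k * m₀ - m : ℤ) : ZMod p) = 0 := by
          push_cast
          have hkc : ((k : ℕ) : ZMod p) = ((m : ℕ) : ZMod p) * ((m₀ : ℕ) : ZMod p)⁻¹ := by
            rw [hk, ZMod.natCast_val, ZMod.cast_id]
          rw [hkc, mul_assoc, ZMod.inv_mul_of_unit _ hm₀unit, mul_one, sub_self]
        have hkb : ((k : ℕ) : ZMod (p ^ (A + 1))) * b₀ = b := by
          have hpd : (p : ℤ) ∣ (k * m₀ - m : ℤ) :=
            (ZMod.intCast_zmod_eq_zero_iff_dvd _ _).mp hkm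
          obtain ⟨t, ht⟩ := hpd
          have hdq : ((p ^ (A + 1) : ℕ) : ℤ) ∣ (k * b₀.val - b.val : ℤ) := by
            refine ⟨t, ?_⟩
            rw [hm₀, hm]
            push_cast
            linear_combination ((p : ℤ) ^ A) * ht
          have h0 : ((k * b₀.val - b.val : ℤ) : ZMod (p ^ (A + 1))) = 0 :=
            (ZMod.intCast_zmod_eq_zero_iff_dvd _ _).mpr hdq
          have h2 : ((k : ℕ) : ZMod (p ^ (A + 1))) * b₀ - b = ((k * b₀.val - b.val : ℤ) : ZMod (p ^ (A + 1))) := by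
            push_cast
            rw [hval b₀, hval b]
          exact sub_eq_zero.mp (h2.trans h0)
        have hgk : g = g₀ ^ k := by
          apply Units.ext
          rw [Units.val_pow_eq_pow_val, hb, hb₀,
            sq_zero_one_add_pow _ (hsq _ _ hb₀dvd hb₀dvd), ← smul_assoc]
          congr 1
          congr 1
          rw [nsmul_eq_mul]
          exact hkb.symm
        rw [hgk]
        exact pow_mem (Subgroup.mem_zpowers g₀) k
      have hordp : g₀ ^ p = 1 := by
        apply Units.ext
        rw [Units.val_pow_eq_pow_val, hb₀, sq_zero_one_add_pow _ (hsq _ _ hb₀dvd hb₀dvd),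
          ← smul_assoc]
        have hz : (p • b₀ : ZMod (p ^ (A + 1))) = 0 := by
          rw [nsmul_eq_mul]
          exact hp_smul b₀ hb₀dvd
        rw [hz, zero_smul, add_zero, Units.val_one]
      calc Nat.card H ∣ Nat.card (Subgroup.zpowers g₀) := Subgroup.card_dvd_of_le hle
        _ = orderOf g₀ := Nat.card_zpowers g₀
        _ ∣ p := orderOf_dvd_of_pow_eq_one hordp
end
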